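/- arXiv:2408.04120 — 2 statements merged into one kernel-verified Lean document; each statement's English description precedes it below -/
import Mathlib

section
/- If I is a w-stable ideal for some weight vector w, then the set of weighted Borel generators Bgens_w(I) is contained in the set of classical Borel generators Bgens(I). -/
open Finset

/-- A monomial in `n` variables, given by its exponent vector. -/
abbrev Mon (n : ℕ) := Fin n → ℕ

/-- The set of monomials of a monomial ideal: a set of monomials upward closed
under divisibility (i.e. closed under multiplication by monomials). -/
def IsMonIdeal {n : ℕ} (I : Set (Mon n)) : Prop := ∀ a ∈ I, ∀ b, a ≤ b → b ∈ I

/-- The Borel move sending `m` to `m · y_i / y_j`. -/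
def borelMove {n : ℕ} (m : Mon n) (i j : Fin n) : Mon n :=
  fun k => if k = i then m k + 1 else if k = j then m k - 1 else m k

/-- A monomial ideal is strongly stable if it is closed under Borel moves
`m ↦ m · y_i / y_j` for `i < j` and `y_j ∣ m`. -/
def StronglyStable {n : ℕ} (I : Set (Mon n)) : Prop :=
  IsMonIdeal I ∧ ∀ m ∈ I, ∀ i j : Fin n, i < j → 0 < m j → borelMove m i j ∈ I

/-- `borelCl T` : the smallest strongly stable ideal containing the set of monomials `T`. -/
def borelCl {n : ℕ} (T : Set (Mon n)) : Set (Mon n) :=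
  ⋂₀ {J : Set (Mon n) | StronglyStable J ∧ T ⊆ J}

/-- The map `ψ : S → R`, `x_i ↦ y_i^{w_i}`, on exponent vectors. -/
def psi {n : ℕ} (w : Fin n → ℕ) (a : Mon n) : Mon n := fun i => w i * a i

/-- A monomial ideal `I ⊆ S` is `w`-stable if it equals its weighted Borel
closure `ψ⁻¹(Borel(ψ(I)))`. -/
def wStable {n : ℕ} (w : Fin n → ℕ) (I : Set (Mon n)) : Prop :=
  I = psi w ⁻¹' borelCl (psi w '' I)

/-- Total degree of a monomial. -/
def deg {n : ℕ} (m : Mon n) : ℕ := ∑ i, m i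

/-- Weighted degree `deg_w(m) = deg(ψ(m))`. -/
def degW {n : ℕ} (w : Fin n → ℕ) (m : Mon n) : ℕ := ∑ i, w i * m i

/-- `psum m t` : the number of variables (with multiplicity) of index `≤ t`
in the factorization of `m`. -/
def psum {n : ℕ} (m : Mon n) (t : Fin n) : ℕ := ∑ i ∈ Finset.univ.filter (· ≤ t), m i

/-- `psumLt m t` : the number of variables (with multiplicity) of index `< t`. -/
def psumLt {n : ℕ} (m : Mon n) (t : Fin n) : ℕ := ∑ i ∈ Finset.univ.filter (· < t), m i

/-- `precedes u v` : `u ≻ v`, i.e. `u` precedes `v` in the Borel order: writing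
`u = y_{i_1}⋯y_{i_r}`, `v = y_{j_1}⋯y_{j_s}` with increasing indices and `r ≥ s`,
we have `i_k ≤ j_k` for all `k ≤ s`.  Equivalently, for every index `t` the number
of factors of `v` of index `≤ t` is at most that of `u`. -/
def precedes {n : ℕ} (u v : Mon n) : Prop := ∀ t : Fin n, psum v t ≤ psum u t

/-- `max(m)` : the largest (1-based) index of a variable dividing `m` (`0` for `m = 1`). -/
def maxVar {n : ℕ} (m : Mon n) : ℕ :=
  (Finset.univ.filter (fun i => m i ≠ 0)).sup (fun i => i.val + 1)

/-- `max(m)` with the convention `max(1) = 1`. -/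
def maxVarOne {n : ℕ} (m : Mon n) : ℕ := max 1 (maxVar m)

/-- `trunc d m` : the `d`-truncation of a monomial, keeping the first `d`
variables (with multiplicity) of the increasing factorization of `m`
(equal to `m` itself when `d ≥ deg m`). -/
def trunc {n : ℕ} (d : ℕ) (m : Mon n) : Mon n :=
  fun k => min (psum m k) d - min (psumLt m k) d

/-- The `d`-truncation of a monomial ideal: the ideal generated by the
`d`-truncations of all its monomials. -/
def truncIdeal {n : ℕ} (d : ℕ) (J : Set (Mon n)) : Set (Mon n) :=
  {v | ∃ m ∈ J, trunc d m ≤ v}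

/-- `minGens J` : the minimal monomial generators of a monomial ideal, i.e. its
monomials not properly divisible by another monomial of the ideal. -/
def minGens {n : ℕ} (J : Set (Mon n)) : Set (Mon n) :=
  {u ∈ J | ∀ v ∈ J, v ≤ u → v = u}


/-- `Bgens(J)` : the monomials that lie in every Borel generating set of `J`
(for a strongly stable ideal this is the unique minimal set of Borel generators). -/
def bgens {n : ℕ} (J : Set (Mon n)) : Set (Mon n) := {m | ∀ T, borelCl T = J → m ∈ T}

/-!
A Borel move `x_i / x_j` (`i < j`) of `a` is sent by `ψ` to a monomial divisible by the
`w_j`-fold Borel move `(y_i / y_j)^{w_j}` of `ψ(a)`, because `w_j ≤ w_i`. Hence `ψ⁻¹` of a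
strongly stable ideal is strongly stable, and therefore `Borel(ψ(Borel(T))) = Borel(ψ(T))`
for every set of monomials `T`. So every Borel generating set `T` of `I` is mapped by `ψ`
to a Borel generating set of `Borel(ψ(I))`, which contains `ψ(a)` for `a ∈ Bgens_w(I)`;
injectivity of `ψ` then gives `a ∈ T`.
-/

section BorelClosure

variable {n : ℕ}

lemma subset_borelCl (T : Set (Mon n)) : T ⊆ borelCl T :=
  fun _ hm _ hJ => hJ.2 hm

lemma borelCl_subset {T J : Set (Mon n)} (hJ : StronglyStable J) (hTJ : T ⊆ J) :
    borelCl T ⊆ J :=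
  fun _ hm => hm J ⟨hJ, hTJ⟩

lemma stronglyStable_borelCl (T : Set (Mon n)) : StronglyStable (borelCl T) :=
  ⟨fun a ha b hab J hJ => hJ.1.1 a (ha J hJ) b hab,
    fun m hm i j hij hj J hJ => hJ.1.2 m (hm J hJ) i j hij hj⟩

lemma borelCl_mono {T U : Set (Mon n)} (h : T ⊆ U) : borelCl T ⊆ borelCl U :=
  borelCl_subset (stronglyStable_borelCl U) (h.trans (subset_borelCl U))

end BorelClosure

section BorelMoveBy

variable {n : ℕ}

def borelMoveBy (m : Mon n) (i j : Fin n) (s : ℕ) : Mon n :=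
  fun k => if k = i then m k + s else if k = j then m k - s else m k

lemma borelMoveBy_zero (m : Mon n) (i j : Fin n) : borelMoveBy m i j 0 = m := by
  funext k
  simp [borelMoveBy]

lemma borelMove_borelMoveBy (m : Mon n) (i j : Fin n) (s : ℕ) :
    borelMove (borelMoveBy m i j s) i j = borelMoveBy m i j (s + 1) := by
  funext k
  simp only [borelMove, borelMoveBy]
  split_ifs <;> omega

lemma StronglyStable.borelMoveBy_mem {J : Set (Mon n)} (hJ : StronglyStable J) {m : Mon n}
    (hm : m ∈ J) {i j : Fin n} (hij : i < j) {s : ℕ} (hs : s ≤ m j) :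
    borelMoveBy m i j s ∈ J := by
  induction s with
  | zero => rwa [borelMoveBy_zero]
  | succ s ih =>
    have hpos : 0 < borelMoveBy m i j s j := by
      simp only [borelMoveBy, if_neg hij.ne', if_true]
      omega
    rw [← borelMove_borelMoveBy]
    exact hJ.2 _ (ih (by omega)) i j hij hpos

end BorelMoveBy

section Psi

variable {n : ℕ} {w : Fin n → ℕ}

lemma psi_injective (hpos : ∀ i, 0 < w i) : Function.Injective (psi w) :=
  fun _ _ hab => funext fun i => Nat.eq_of_mul_eq_mul_left (hpos i) (congrFun hab i)

lemma borelMoveBy_psi_le_psi_borelMove (hmono : Antitone w) (m : Mon n) {i j : Fin n}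
    (hij : i < j) : borelMoveBy (psi w m) i j (w j) ≤ psi w (borelMove m i j) := by
  intro k
  have hw : w j ≤ w i := hmono hij.le
  simp only [borelMoveBy, borelMove, psi]
  split_ifs with hki hkj
  · subst hki
    rw [Nat.mul_add_one]
    omega
  · subst hkj
    rw [Nat.mul_sub_one]
  · exact le_rfl

lemma StronglyStable.preimage_psi (hmono : Antitone w) {J : Set (Mon n)}
    (hJ : StronglyStable J) : StronglyStable (psi w ⁻¹' J) := by
  refine ⟨fun a ha b hab => hJ.1 _ ha _ fun i => Nat.mul_le_mul_left _ (hab i), ?_⟩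
  intro m hm i j hij hj
  exact hJ.1 _ (hJ.borelMoveBy_mem hm hij (Nat.le_mul_of_pos_right _ hj)) _
    (borelMoveBy_psi_le_psi_borelMove hmono m hij)

lemma borelCl_image_psi_borelCl (hmono : Antitone w) (T : Set (Mon n)) :
    borelCl (psi w '' borelCl T) = borelCl (psi w '' T) := by
  refine (borelCl_subset (stronglyStable_borelCl _) (Set.image_subset_iff.2 ?_)).antisymm
    (borelCl_mono (Set.image_mono (subset_borelCl T)))
  exact borelCl_subset ((stronglyStable_borelCl _).preimage_psi hmono)
    (Set.image_subset_iff.1 (subset_borelCl _))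

end Psi

theorem stmt9_general {n : ℕ} (w : Fin n → ℕ) (hpos : ∀ i, 0 < w i) (hmono : Antitone w) (I : Set (Mon n)) :
    psi w ⁻¹' bgens (borelCl (psi w '' I)) ⊆ bgens I := by
  intro a ha T hT
  subst hT
  obtain ⟨b, hb, hba⟩ := ha (psi w '' T) (borelCl_image_psi_borelCl hmono T).symm
  rwa [← psi_injective hpos hba]

/-- If `I` is `w`-stable, then `Bgens_w(I) = ψ⁻¹(Bgens(Borel(ψ(I))))`
is contained in `Bgens(I)`, the classical (weight-one) Borel generators of `I`. -/
theorem stmt9 {n : ℕ} (w : Fin n → ℕ) (hpos : ∀ i, 0 < w i) (hmono : Antitone w) (I : Set (Mon n)) (hI : IsMonIdeal I)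
    (hws : wStable w I) :
    psi w ⁻¹' bgens (borelCl (psi w '' I)) ⊆ bgens I :=
  stmt9_general w hpos hmono I
end

section
/- Let w be a weight vector and m ∈ S a monomial with d = deg_w(m). The set of minimal monomial generators of the principal w-stable ideal \overline{m} = ψ^{-1}(Borel(ψ(m))) equals the set of sinks (leaves) of the finite tree T_w(m). -/
open Finset

/-- The edge condition of the finite tree `T_w(m)`: there is an edge `(v, v·x_j)`
iff `max(v) ≤ j ≤ max(trunc_{deg_w(v)+1}(ψ(m)))` (1-based indices, `max(1) = 1`)
and `deg_w(v) < deg_w(m)`. -/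
def treeEdge {n : ℕ} (w : Fin n → ℕ) (m : Mon n) (v : Mon n) (j : Fin n) : Prop :=
  maxVarOne v ≤ j.val + 1 ∧
  j.val + 1 ≤ maxVar (trunc (degW w v + 1) (psi w m)) ∧
  degW w v < degW w m

/-- Vertices of the finite tree `T_w(m)`: monomials reachable from the root `1`. -/
inductive TreeVertex {n : ℕ} (w : Fin n → ℕ) (m : Mon n) : Mon n → Prop
  | root : TreeVertex w m 0
  | step {v : Mon n} (j : Fin n) : TreeVertex w m v → treeEdge w m v j →
      TreeVertex w m (v + Pi.single j 1)

section Aux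
variable {n : ℕ}

lemma psum_mono (x : Mon n) {s t : Fin n} (h : s ≤ t) : psum x s ≤ psum x t :=
  Finset.sum_le_sum_of_subset (fun i hi => by
    simp only [Finset.mem_filter, Finset.mem_univ, true_and] at *
    exact le_trans hi h)

lemma psum_eq_psumLt_add (x : Mon n) (t : Fin n) : psum x t = psumLt x t + x t := by
  have h : Finset.univ.filter (· ≤ t) = insert t (Finset.univ.filter (· < t)) := by
    ext k
    simp only [Finset.mem_filter, Finset.mem_univ, true_and, Finset.mem_insert]
    rw [Fin.lt_def, Fin.le_def, Fin.ext_iff]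
    omega
  rw [psum, psumLt, h, Finset.sum_insert (by
    simp only [Finset.mem_filter, Finset.mem_univ, true_and]
    rw [Fin.lt_def]; omega)]
  omega

lemma psumLt_le_psum (x : Mon n) (t : Fin n) : psumLt x t ≤ psum x t := by
  rw [psum_eq_psumLt_add]; omega

lemma psum_le_psumLt (x : Mon n) {s t : Fin n} (h : s < t) : psum x s ≤ psumLt x t :=
  Finset.sum_le_sum_of_subset (fun i hi => by
    simp only [Finset.mem_filter, Finset.mem_univ, true_and, Fin.le_def, Fin.lt_def] at *
    omega)

lemma psumLt_mono (x : Mon n) {s t : Fin n} (h : s ≤ t) : psumLt x s ≤ psumLt x t :=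
  Finset.sum_le_sum_of_subset (fun i hi => by
    simp only [Finset.mem_filter, Finset.mem_univ, true_and, Fin.lt_def, Fin.le_def] at *
    omega)

lemma psum_le_total (x : Mon n) (t : Fin n) : psum x t ≤ ∑ i, x i :=
  Finset.sum_le_sum_of_subset (Finset.filter_subset _ _)

lemma psumLt_le_total (x : Mon n) (t : Fin n) : psumLt x t ≤ ∑ i, x i :=
  Finset.sum_le_sum_of_subset (Finset.filter_subset _ _)

lemma psum_eq_total (x : Mon n) (t : Fin n) (h : ∀ i, t < i → x i = 0) : psum x t = ∑ i, x i :=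
  Finset.sum_subset (Finset.filter_subset _ _) (fun i _ hi => by
    apply h
    simp only [Finset.mem_filter, Finset.mem_univ, true_and] at hi
    exact lt_of_not_ge hi)

lemma psum_eq_psumLt_of_zero (x : Mon n) {j t : Fin n} (hjt : j ≤ t)
    (h : ∀ k, j ≤ k → x k = 0) : psum x t = psumLt x j := by
  refine (Finset.sum_subset (fun i hi => ?_) (fun i _ hi => ?_)).symm
  · simp only [Finset.mem_filter, Finset.mem_univ, true_and, Fin.le_def, Fin.lt_def] at *
    omega
  · apply h
    simp only [Finset.mem_filter, Finset.mem_univ, true_and, Fin.lt_def, Fin.le_def] at *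
    omega

lemma psumLt_eq_psum_of_zero (x : Mon n) {t j : Fin n} (htj : t < j)
    (h : ∀ k, t < k → k < j → x k = 0) : psumLt x j = psum x t := by
  refine (Finset.sum_subset (fun i hi => ?_) (fun i hi1 hi2 => ?_)).symm
  · simp only [Finset.mem_filter, Finset.mem_univ, true_and, Fin.le_def, Fin.lt_def] at *
    omega
  · apply h <;>
    · simp only [Finset.mem_filter, Finset.mem_univ, true_and, Fin.lt_def, Fin.le_def] at *
      omega

lemma psumLt_congr_zero (x : Mon n) {s j : Fin n} (hsj : s ≤ j)
    (h : ∀ k, s ≤ k → k < j → x k = 0) : psumLt x j = psumLt x s := by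
  refine (Finset.sum_subset (fun i hi => ?_) (fun i hi1 hi2 => ?_)).symm
  · simp only [Finset.mem_filter, Finset.mem_univ, true_and, Fin.lt_def] at *
    omega
  · apply h <;>
    · simp only [Finset.mem_filter, Finset.mem_univ, true_and, Fin.lt_def, Fin.le_def] at *
      omega

lemma psum_add (x y : Mon n) (t : Fin n) : psum (x + y) t = psum x t + psum y t := by
  simp [psum, Pi.add_apply, Finset.sum_add_distrib]

lemma psum_single (j : Fin n) (c : ℕ) (t : Fin n) :
    psum (Pi.single j c) t = if j ≤ t then c else 0 := by
  rw [psum]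
  rw [Finset.sum_congr rfl (fun i _ => Pi.single_apply j c i)]
  rw [Finset.sum_ite_eq' _ j (fun _ => c)]
  simp

lemma psumLt_single (j : Fin n) (c : ℕ) (t : Fin n) :
    psumLt (Pi.single j c) t = if j < t then c else 0 := by
  rw [psumLt]
  rw [Finset.sum_congr rfl (fun i _ => Pi.single_apply j c i)]
  rw [Finset.sum_ite_eq' _ j (fun _ => c)]
  simp

lemma psum_succ (x : Mon n) {s t : Fin n} (h : s.val + 1 = t.val) :
    psum x t = psum x s + x t := by
  have hst : Finset.univ.filter (· ≤ t) = insert t (Finset.univ.filter (· ≤ s)) := by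
    ext k
    simp only [Finset.mem_filter, Finset.mem_univ, true_and, Finset.mem_insert]
    rw [Fin.le_def, Fin.le_def, Fin.ext_iff]
    omega
  rw [psum, hst, Finset.sum_insert (by
    simp only [Finset.mem_filter, Finset.mem_univ, true_and]
    rw [Fin.le_def]; omega)]
  rw [psum]; omega

lemma eq_of_psum_eq {u v : Mon n} (h : ∀ t, psum u t = psum v t) : u = v := by
  suffices h2 : ∀ N, ∀ i : Fin n, i.val < N → u i = v i by
    funext i; exact h2 n i i.isLt
  intro N
  induction N with
  | zero => intro i hi; omega
  | succ N ih =>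
    intro i hi
    by_cases hc : i.val < N
    · exact ih i hc
    · have hlt : psumLt u i = psumLt v i := by
        refine Finset.sum_congr rfl (fun k hk => ?_)
        simp only [Finset.mem_filter, Finset.mem_univ, true_and, Fin.lt_def] at hk
        exact ih k (by omega)
      have h1 := psum_eq_psumLt_add u i
      have h2 := psum_eq_psumLt_add v i
      have h3 := h i
      omega

end Aux
section Aux2
variable {n : ℕ}

lemma maxVar_le_iff (x : Mon n) (c : ℕ) : maxVar x ≤ c ↔ ∀ i, x i ≠ 0 → i.val + 1 ≤ c := by
  simp [maxVar, Finset.sup_le_iff]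

lemma lt_maxVar_iff (x : Mon n) (c : ℕ) : c < maxVar x ↔ ∃ i, x i ≠ 0 ∧ c < i.val + 1 := by
  simp [maxVar, Finset.lt_sup_iff]

lemma maxVarOne_le_succ_iff (x : Mon n) (j : Fin n) :
    maxVarOne x ≤ j.val + 1 ↔ ∀ i, x i ≠ 0 → i ≤ j := by
  rw [maxVarOne, max_le_iff, maxVar_le_iff]
  constructor
  · intro h i hi
    rw [Fin.le_def]
    have := h.2 i hi
    omega
  · intro h
    refine ⟨by omega, fun i hi => ?_⟩
    have := h i hi
    rw [Fin.le_def] at this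
    omega

lemma trunc_ne_zero_iff (d : ℕ) (x : Mon n) (k : Fin n) :
    trunc d x k ≠ 0 ↔ x k ≠ 0 ∧ psumLt x k < d := by
  have h := psum_eq_psumLt_add x k
  simp only [trunc]
  omega

lemma le_maxVar_trunc_iff (d : ℕ) (x : Mon n) (j : Fin n) :
    j.val + 1 ≤ maxVar (trunc d x) ↔ ∃ k, j ≤ k ∧ x k ≠ 0 ∧ psumLt x k < d := by
  rw [Nat.succ_le_iff, lt_maxVar_iff]
  constructor
  · rintro ⟨i, hi, hlt⟩
    rw [trunc_ne_zero_iff] at hi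
    exact ⟨i, by rw [Fin.le_def]; omega, hi⟩
  · rintro ⟨k, hk, h1, h2⟩
    refine ⟨k, by rw [trunc_ne_zero_iff]; exact ⟨h1, h2⟩, ?_⟩
    rw [Fin.le_def] at hk
    omega

lemma psi_add_single (w : Fin n → ℕ) (x : Mon n) (j : Fin n) :
    psi w (x + Pi.single j 1) = psi w x + Pi.single j (w j) := by
  funext i
  by_cases h : i = j
  · subst h; simp [psi, Nat.mul_add]
  · simp [psi, Pi.single_apply, h]

lemma degW_eq_sum (w : Fin n → ℕ) (x : Mon n) : degW w x = ∑ i, psi w x i := rfl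

lemma psum_le_degW (w : Fin n → ℕ) (x : Mon n) (t : Fin n) : psum (psi w x) t ≤ degW w x := by
  rw [degW_eq_sum]; exact psum_le_total _ _

lemma psumLt_le_degW (w : Fin n → ℕ) (x : Mon n) (t : Fin n) : psumLt (psi w x) t ≤ degW w x := by
  rw [degW_eq_sum]; exact psumLt_le_total _ _

lemma degW_eq_psum (w : Fin n → ℕ) (x : Mon n) (t : Fin n) (h : ∀ i, t < i → x i = 0) :
    degW w x = psum (psi w x) t := by
  rw [degW_eq_sum, psum_eq_total]
  intro i hi
  simp [psi, h i hi]

lemma psi_ne_zero_iff (w : Fin n → ℕ) (hpos : ∀ i, 0 < w i) (x : Mon n) (i : Fin n) :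
    psi w x i ≠ 0 ↔ x i ≠ 0 := by
  have := hpos i
  simp only [psi, Nat.mul_ne_zero_iff]
  omega

lemma psum_last (x : Mon n) (hn : 0 < n) : psum x ⟨n - 1, by omega⟩ = ∑ i, x i := by
  apply psum_eq_total
  intro i hi
  rw [Fin.lt_def] at hi
  simp at hi
  omega

lemma psumLt_le_of_psum_le {a b : Mon n} (h : ∀ t, psum a t ≤ psum b t) (j : Fin n) :
    psumLt a j ≤ psumLt b j := by
  rcases Nat.eq_zero_or_pos j.val with h0 | h0
  · have : psumLt a j = 0 := by
      rw [psumLt]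
      apply Finset.sum_eq_zero
      intro k hk
      simp only [Finset.mem_filter, Finset.mem_univ, true_and, Fin.lt_def] at hk
      omega
    omega
  · set t : Fin n := ⟨j.val - 1, by omega⟩ with ht
    have h1 : psumLt a j = psum a t := by
      apply psumLt_eq_psum_of_zero
      · rw [Fin.lt_def]; simp [ht]; omega
      · intro k hk1 hk2
        rw [Fin.lt_def] at hk1 hk2
        simp [ht] at hk1
        omega
    have h2 : psumLt b j = psum b t := by
      apply psumLt_eq_psum_of_zero
      · rw [Fin.lt_def]; simp [ht]; omega
      · intro k hk1 hk2
        rw [Fin.lt_def] at hk1 hk2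
        simp [ht] at hk1
        omega
    rw [h1, h2]
    exact h t

end Aux2
section Aux3
variable {n : ℕ}

lemma borelMove_add_single {x : Mon n} {i j : Fin n} (hij : i < j) (hx : 0 < x j) :
    borelMove x i j + Pi.single j 1 = x + Pi.single i 1 := by
  have hne : i ≠ j := ne_of_lt hij
  funext k
  by_cases h1 : k = i
  · subst h1
    simp [borelMove, Pi.single_apply, hne]
  · by_cases h2 : k = j
    · subst h2
      simp only [Pi.add_apply, borelMove, Pi.single_apply]
      rw [if_neg (Ne.symm hne)]
      simp only [if_true]
      rw [if_neg (Ne.symm hne)]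
      omega
    · simp [borelMove, Pi.single_apply, h1, h2]

lemma psum_borelMove_eq {x : Mon n} {i j : Fin n} (hij : i < j) (hx : 0 < x j) (t : Fin n) :
    psum (borelMove x i j) t + (if j ≤ t then 1 else 0)
      = psum x t + (if i ≤ t then 1 else 0) := by
  have := congrArg (fun y => psum y t) (borelMove_add_single hij hx)
  simpa [psum_add, psum_single] using this

lemma precedes_stronglyStable (u : Mon n) :
    StronglyStable {v : Mon n | ∀ t, psum u t ≤ psum v t} := by
  constructor
  · intro a ha b hab t
    exact le_trans (ha t) (Finset.sum_le_sum fun i _ => hab i)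
  · intro x hx i j hij hxj t
    refine le_trans (hx t) ?_
    have h := psum_borelMove_eq hij hxj t
    have hij' : j ≤ t → i ≤ t := fun h2 => le_of_lt (lt_of_lt_of_le hij h2)
    by_cases h1 : i ≤ t <;> by_cases h2 : j ≤ t <;> simp [h1, h2] at h ⊢ <;> omega

lemma mem_stronglyStable_of_psum_le {J : Set (Mon n)} (hJ : StronglyStable J) {v : Mon n} :
    ∀ (N : ℕ) (u : Mon n), u ∈ J → (∀ t, psum u t ≤ psum v t) →
      (∑ t, (psum v t - psum u t)) ≤ N → v ∈ J := by
  intro N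
  induction N with
  | zero =>
    intro u hu hle hN
    have heq : ∀ t, psum u t = psum v t := by
      intro t
      have h1 : psum v t - psum u t ≤ 0 := le_trans
        (Finset.single_le_sum (f := fun s => psum v s - psum u s)
          (fun i _ => Nat.zero_le _) (Finset.mem_univ t)) hN
      have := hle t
      omega
    rwa [← eq_of_psum_eq heq]
  | succ N ih =>
    intro u hu hle hN
    by_cases hall : ∀ t, psum v t ≤ psum u t
    · have heq : ∀ t, psum u t = psum v t := fun t => le_antisymm (hle t) (hall t)
      rwa [← eq_of_psum_eq heq]
    push_neg at hall
    obtain ⟨t, ht⟩ := hall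
    set T := Finset.univ.filter (fun s => psum u s < psum v s) with hT
    have hTne : T.Nonempty := ⟨t, by simp [hT]; omega⟩
    set i := T.min' hTne with hi
    have hiT : psum u i < psum v i := by
      have := T.min'_mem hTne
      simp [hT] at this
      exact this
    have hmin : ∀ s, psum u s < psum v s → i ≤ s := fun s hs =>
      T.min'_le s (by simp [hT]; exact hs)
    have hmeas : ∀ u' : Mon n, psum u' i = psum u i + 1 →
        (∀ s, psum u' s ≤ psum v s) →
        (∑ s, (psum v s - psum u' s)) ≤ N → True := fun _ _ _ _ => trivial
    set T2 := Finset.univ.filter (fun s => i < s ∧ psum v s ≤ psum u s) with hT2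
    by_cases hT2ne : T2.Nonempty
    · -- Borel move case
      set t0 := T2.min' hT2ne with ht0def
      have ht0 : i < t0 ∧ psum v t0 ≤ psum u t0 :=
        (Finset.mem_filter.mp (T2.min'_mem hT2ne)).2
      have ht0min : ∀ s, i < s → psum v s ≤ psum u s → t0 ≤ s := fun s h1 h2 =>
        T2.min'_le s (Finset.mem_filter.mpr ⟨Finset.mem_univ s, h1, h2⟩)
      have hstrictmid : ∀ s, i ≤ s → s < t0 → psum u s < psum v s := by
        intro s h1 h2
        rcases eq_or_lt_of_le h1 with h3 | h3
        · rw [← h3]; exact hiT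
        · by_contra hcon
          exact absurd (ht0min s h3 (le_of_not_gt hcon)) (not_le_of_gt h2)
      have hival : i.val < t0.val := by rw [← Fin.lt_def]; exact ht0.1
      set t1 : Fin n := ⟨t0.val - 1, by omega⟩ with ht1def
      have ht1succ : t1.val + 1 = t0.val := by simp [ht1def]; omega
      have hit1 : i ≤ t1 := by rw [Fin.le_def]; simp [ht1def]; omega
      have ht1lt : t1 < t0 := by rw [Fin.lt_def]; omega
      have ht1strict : psum u t1 < psum v t1 := hstrictmid t1 hit1 ht1lt
      have hsu : psum u t0 = psum u t1 + u t0 := psum_succ u ht1succ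
      have hsv : psum v t0 = psum v t1 + v t0 := psum_succ v ht1succ
      have hxj : 0 < u t0 := by omega
      set u' := borelMove u i t0 with hu'def
      have hu' : u' ∈ J := hJ.2 u hu i t0 ht0.1 hxj
      have hps : ∀ s, psum u' s + (if t0 ≤ s then 1 else 0) = psum u s + (if i ≤ s then 1 else 0) :=
        psum_borelMove_eq ht0.1 hxj
      have hble : ∀ s, psum u' s ≤ psum v s := by
        intro s
        have h := hps s
        by_cases h1 : i ≤ s
        · by_cases h2 : t0 ≤ s
          · have := hle s; simp [h1, h2] at h; omega
          · have := hstrictmid s h1 (lt_of_not_ge h2)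
            simp [h1, h2] at h; omega
        · have h2 : ¬ t0 ≤ s := fun hc => h1 (le_of_lt (lt_of_lt_of_le ht0.1 hc))
          have := hle s; simp [h1, h2] at h; omega
      have hui : psum u' i = psum u i + 1 := by
        have h := hps i
        have h2 : ¬ t0 ≤ i := not_le_of_gt ht0.1
        simpa [h2] using h
      refine ih u' hu' hble ?_
      have hlt : (∑ s, (psum v s - psum u' s)) < ∑ s, (psum v s - psum u s) := by
        apply Finset.sum_lt_sum
        · intro s _
          have hA := hps s
          have hB := hble s
          by_cases h1 : i ≤ s <;> by_cases h2 : t0 ≤ s <;> simp [h1, h2] at hA <;> omega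
        · exact ⟨i, Finset.mem_univ i, by omega⟩
      omega
    · -- multiplication case
      rw [Finset.not_nonempty_iff_eq_empty] at hT2ne
      have hnot : ∀ s, i < s → psum u s < psum v s := by
        intro s h1
        by_contra hcon
        have : s ∈ T2 := by simp [hT2]; exact ⟨h1, le_of_not_gt hcon⟩
        rw [hT2ne] at this
        exact absurd this (Finset.notMem_empty s)
      set u' := u + Pi.single i 1 with hu'def
      have hu' : u' ∈ J := hJ.1 u hu u' (fun k => by
        simp only [hu'def, Pi.add_apply]
        exact Nat.le_add_right _ _)
      have hps : ∀ s, psum u' s = psum u s + (if i ≤ s then 1 else 0) := by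
        intro s
        rw [hu'def, psum_add, psum_single]
      have hble : ∀ s, psum u' s ≤ psum v s := by
        intro s
        rw [hps s]
        by_cases h1 : i ≤ s
        · rcases eq_or_lt_of_le h1 with h3 | h3
          · rw [← h3] at *; simp; omega
          · have := hnot s h3; simp [h1]; omega
        · simp [h1]; exact hle s
      refine ih u' hu' hble ?_
      have hlt : (∑ s, (psum v s - psum u' s)) < ∑ s, (psum v s - psum u s) := by
        apply Finset.sum_lt_sum
        · intro s _
          have := hps s
          have := hble s
          omega
        · refine ⟨i, Finset.mem_univ i, ?_⟩
          have := hps i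
          simp at this
          omega
      omega

lemma borelCl_singleton (u : Mon n) :
    borelCl {u} = {v : Mon n | ∀ t, psum u t ≤ psum v t} := by
  apply subset_antisymm
  · apply Set.sInter_subset_of_mem
    refine ⟨precedes_stronglyStable u, ?_⟩
    intro x hx
    rw [Set.mem_singleton_iff] at hx
    subst hx
    intro t
    exact le_rfl
  · intro v hv
    rw [borelCl, Set.mem_sInter]
    rintro J ⟨hSS, hsub⟩
    exact mem_stronglyStable_of_psum_le hSS _ u (hsub rfl) hv le_rfl

end Aux3
section Aux4
variable {n : ℕ}

lemma psumLt_add (x y : Mon n) (t : Fin n) : psumLt (x + y) t = psumLt x t + psumLt y t := by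
  simp [psumLt, Pi.add_apply, Finset.sum_add_distrib]

lemma degW_add_single (w : Fin n → ℕ) (x : Mon n) (j : Fin n) :
    degW w (x + Pi.single j 1) = degW w x + w j := by
  rw [degW_eq_sum, psi_add_single, degW_eq_sum]
  simp only [Pi.add_apply]
  rw [Finset.sum_add_distrib]
  congr 1
  rw [Finset.sum_congr rfl (fun i _ => Pi.single_apply j (w j) i)]
  rw [Finset.sum_ite_eq' _ j (fun _ => w j)]
  simp

lemma degW_mono (w : Fin n → ℕ) {x y : Mon n} (h : x ≤ y) : degW w x ≤ degW w y :=
  Finset.sum_le_sum (fun i _ => Nat.mul_le_mul_left _ (h i))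

/-- The explicit characterization of the vertices of the tree. -/
def VC (w : Fin n → ℕ) (m v : Mon n) : Prop :=
  ∀ j : Fin n, 0 < v j →
    psumLt (psi w m) j ≤ psumLt (psi w v) j ∧
    psum (psi w v) j < degW w m + w j ∧
    ∃ k, j ≤ k ∧ m k ≠ 0

lemma VC_of_treeVertex {w : Fin n → ℕ} (hpos : ∀ i, 0 < w i) {m v : Mon n}
    (h : TreeVertex w m v) : VC w m v := by
  induction h with
  | root => intro j hj; simp at hj
  | @step v j htv he ih =>
    intro j' hj'
    obtain ⟨he1, he2, he3⟩ := he
    rw [maxVarOne_le_succ_iff] at he1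
    rw [le_maxVar_trunc_iff] at he2
    obtain ⟨k, hk1, hk2, hk3⟩ := he2
    rw [psi_ne_zero_iff w hpos] at hk2
    have hps : ∀ t, psum (psi w (v + Pi.single j 1)) t
        = psum (psi w v) t + (if j ≤ t then w j else 0) := fun t => by
      rw [psi_add_single, psum_add, psum_single]
    have hpsLt : ∀ t, psumLt (psi w (v + Pi.single j 1)) t
        = psumLt (psi w v) t + (if j < t then w j else 0) := fun t => by
      rw [psi_add_single, psumLt_add, psumLt_single]
    by_cases hjj : j' = j
    · subst hjj
      refine ⟨?_, ?_, ⟨k, hk1, hk2⟩⟩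
      · rw [hpsLt j', if_neg (lt_irrefl j'), add_zero]
        by_cases hvj : 0 < v j'
        · exact (ih j' hvj).1
        · have hzero : ∀ i, j' ≤ i → psi w v i = 0 := by
            intro i hi
            have hvi : v i = 0 := by
              by_contra hc
              have h4 : i ≤ j' := he1 i hc
              have h5 : i = j' := le_antisymm h4 hi
              rw [h5] at hc
              omega
            simp [psi, hvi]
          have h1 : psum (psi w v) j' = psumLt (psi w v) j' := by
            rw [psum_eq_psumLt_add, hzero j' le_rfl, add_zero]
          have h2 : degW w v = psum (psi w v) j' := by
            apply degW_eq_psum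
            intro i hi
            have h7 := hzero i (le_of_lt hi)
            simp only [psi] at h7
            rcases Nat.mul_eq_zero.mp h7 with h8 | h8
            · exact absurd h8 (Nat.pos_iff_ne_zero.mp (hpos i))
            · exact h8
          have h3 : psumLt (psi w m) j' ≤ psumLt (psi w m) k := psumLt_mono _ hk1
          omega
      · rw [hps j', if_pos le_rfl]
        have := psum_le_degW w v j'
        omega
    · have hvj' : 0 < v j' := by
        have h6 : ((v + Pi.single j 1 : Mon n)) j' = v j' + (if j' = j then 1 else 0) := by
          rw [Pi.add_apply, Pi.single_apply]
        rw [if_neg hjj, add_zero] at h6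
        omega
      obtain ⟨c1, c2, c3⟩ := ih j' hvj'
      have hj'le : j' ≤ j := he1 j' (by omega)
      have hj'lt : j' < j := lt_of_le_of_ne hj'le hjj
      refine ⟨?_, ?_, c3⟩
      · rw [hpsLt j', if_neg (by rw [Fin.lt_def] at *; omega), add_zero]
        exact c1
      · rw [hps j', if_neg (by rw [Fin.le_def] at *; rw [Fin.lt_def] at hj'lt; omega), add_zero]
        exact c2

lemma treeVertex_of_VC_aux {w : Fin n → ℕ} (hpos : ∀ i, 0 < w i) {m : Mon n} :
    ∀ (N : ℕ) (v : Mon n), (∑ i, v i) ≤ N → VC w m v → TreeVertex w m v := by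
  intro N
  induction N with
  | zero =>
    intro v hN _
    have hz : v = 0 := by
      funext i
      have h1 : v i ≤ ∑ k, v k :=
        Finset.single_le_sum (f := fun k => v k) (fun _ _ => Nat.zero_le _) (Finset.mem_univ i)
      simp only [Pi.zero_apply]
      omega
    rw [hz]; exact TreeVertex.root
  | succ N ih =>
    intro v hN hVC
    by_cases hz : ∀ i, v i = 0
    · have : v = 0 := funext hz
      rw [this]; exact TreeVertex.root
    push_neg at hz
    obtain ⟨i0, hi0⟩ := hz
    have hAne : (Finset.univ.filter (fun i => v i ≠ 0)).Nonempty :=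
      ⟨i0, Finset.mem_filter.mpr ⟨Finset.mem_univ _, hi0⟩⟩
    set jm := (Finset.univ.filter (fun i => v i ≠ 0)).max' hAne with hjmdef
    have hjm : v jm ≠ 0 := (Finset.mem_filter.mp (Finset.max'_mem _ hAne)).2
    have hjmax : ∀ i, v i ≠ 0 → i ≤ jm := fun i hi =>
      Finset.le_max' _ i (Finset.mem_filter.mpr ⟨Finset.mem_univ _, hi⟩)
    set v' := v - Pi.single jm 1 with hv'def
    have hv'app : ∀ k, v' k = v k - (if k = jm then 1 else 0) := fun k => by
      rw [hv'def, Pi.sub_apply, Pi.single_apply]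
    have hvv' : v = v' + Pi.single jm 1 := by
      funext k
      rw [Pi.add_apply, hv'app k, Pi.single_apply]
      by_cases hk : k = jm
      · subst hk; simp; omega
      · simp [hk]
    have hsum' : (∑ i, v' i) ≤ N := by
      have h1 : ∑ i, v i = (∑ i, v' i) + 1 := by
        conv_lhs => rw [hvv']
        simp only [Pi.add_apply]
        rw [Finset.sum_add_distrib]
        congr 1
        rw [Finset.sum_congr rfl (fun i _ => Pi.single_apply jm 1 i)]
        rw [Finset.sum_ite_eq' _ jm (fun _ => 1)]
        simp
      omega
    have hps : ∀ t, psum (psi w v) t = psum (psi w v') t + (if jm ≤ t then w jm else 0) :=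
      fun t => by conv_lhs => rw [hvv']; rw [psi_add_single, psum_add, psum_single]
    have hpsLt : ∀ t, psumLt (psi w v) t = psumLt (psi w v') t + (if jm < t then w jm else 0) :=
      fun t => by conv_lhs => rw [hvv']; rw [psi_add_single, psumLt_add, psumLt_single]
    have hdeg : degW w v = degW w v' + w jm := by
      conv_lhs => rw [hvv']
      rw [degW_add_single]
    have hVC' : VC w m v' := by
      intro j' hj'
      have hv'j : 0 < v j' := by have := hv'app j'; omega
      obtain ⟨c1, c2, c3⟩ := hVC j' hv'j
      have hj'le : j' ≤ jm := hjmax j' (by omega)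
      refine ⟨?_, ?_, c3⟩
      · have := hpsLt j'
        rw [if_neg (by rw [Fin.lt_def]; rw [Fin.le_def] at hj'le; omega), add_zero] at this
        omega
      · have := hps j'
        have hnn : (if jm ≤ j' then w jm else 0) ≤ w jm := by split <;> omega
        omega
    have hedge : treeEdge w m v' jm := by
      obtain ⟨c1, c2, c3⟩ := hVC jm (Nat.pos_of_ne_zero hjm)
      refine ⟨?_, ?_, ?_⟩
      · rw [maxVarOne_le_succ_iff]
        intro i hi
        have : v i ≠ 0 := by have := hv'app i; omega
        exact hjmax i this
      · rw [le_maxVar_trunc_iff]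
        obtain ⟨k0, hk01, hk02⟩ := c3
        have hKne : (Finset.univ.filter (fun k => jm ≤ k ∧ m k ≠ 0)).Nonempty :=
          ⟨k0, Finset.mem_filter.mpr ⟨Finset.mem_univ _, hk01, hk02⟩⟩
        set k := (Finset.univ.filter (fun k => jm ≤ k ∧ m k ≠ 0)).min' hKne with hkdef
        have hk : jm ≤ k ∧ m k ≠ 0 := (Finset.mem_filter.mp (Finset.min'_mem _ hKne)).2
        have hkmin : ∀ s, jm ≤ s → m s ≠ 0 → k ≤ s := fun s h1 h2 =>
          Finset.min'_le _ s (Finset.mem_filter.mpr ⟨Finset.mem_univ _, h1, h2⟩)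
        refine ⟨k, hk.1, (psi_ne_zero_iff w hpos m k).mpr hk.2, ?_⟩
        have hgap : psumLt (psi w m) k = psumLt (psi w m) jm := by
          apply psumLt_congr_zero _ hk.1
          intro i h1 h2
          have hmi : m i = 0 := by
            by_contra hc
            exact absurd (hkmin i h1 hc) (not_le_of_gt h2)
          simp [psi, hmi]
        have h1 : psum (psi w v) jm = psumLt (psi w v) jm + w jm * v jm :=
          psum_eq_psumLt_add _ _
        have h2 : psum (psi w v) jm ≤ degW w v := psum_le_degW _ _ _
        have h3 : w jm ≤ w jm * v jm :=
          Nat.le_mul_of_pos_right _ (Nat.pos_of_ne_zero hjm)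
        omega
      · have hdv : degW w v = psum (psi w v) jm := by
          apply degW_eq_psum
          intro i hi
          by_contra hc
          exact absurd (hjmax i hc) (not_le_of_gt hi)
        omega
    have htv' := ih v' hsum' hVC'
    rw [hvv']
    exact TreeVertex.step jm htv' hedge

lemma treeVertex_iff_VC {w : Fin n → ℕ} (hpos : ∀ i, 0 < w i) {m v : Mon n} :
    TreeVertex w m v ↔ VC w m v :=
  ⟨VC_of_treeVertex hpos, treeVertex_of_VC_aux hpos _ v le_rfl⟩

lemma sink_iff_of_VC {w : Fin n → ℕ} (hpos : ∀ i, 0 < w i) {m v : Mon n} (hVC : VC w m v) :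
    (∀ j, ¬ treeEdge w m v j) ↔ degW w m ≤ degW w v := by
  constructor
  · intro hsink
    by_contra hlt
    push_neg at hlt
    by_cases hz : ∀ i, v i = 0
    · have hm : ∃ k, m k ≠ 0 := by
        by_contra hc
        push_neg at hc
        have : degW w m = 0 := Finset.sum_eq_zero (fun i _ => by rw [hc i, mul_zero])
        omega
      obtain ⟨k0, hk0⟩ := hm
      have hKne : (Finset.univ.filter (fun k => m k ≠ 0)).Nonempty :=
        ⟨k0, Finset.mem_filter.mpr ⟨Finset.mem_univ _, hk0⟩⟩
      set j := (Finset.univ.filter (fun k => m k ≠ 0)).min' hKne with hjdef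
      have hj : m j ≠ 0 := (Finset.mem_filter.mp (Finset.min'_mem _ hKne)).2
      have hjmin : ∀ s, m s ≠ 0 → j ≤ s := fun s h2 =>
        Finset.min'_le _ s (Finset.mem_filter.mpr ⟨Finset.mem_univ _, h2⟩)
      apply hsink j
      refine ⟨?_, ?_, hlt⟩
      · rw [maxVarOne_le_succ_iff]
        intro i hi
        exact absurd (hz i) hi
      · rw [le_maxVar_trunc_iff]
        refine ⟨j, le_rfl, (psi_ne_zero_iff w hpos m j).mpr hj, ?_⟩
        have h0 : psumLt (psi w m) j = 0 := by
          apply Finset.sum_eq_zero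
          intro i hi
          have hi' : i < j := (Finset.mem_filter.mp hi).2
          have : m i = 0 := by
            by_contra hc
            exact absurd (hjmin i hc) (not_le_of_gt hi')
          simp [psi, this]
        omega
    · push_neg at hz
      obtain ⟨i0, hi0⟩ := hz
      have hAne : (Finset.univ.filter (fun i => v i ≠ 0)).Nonempty :=
        ⟨i0, Finset.mem_filter.mpr ⟨Finset.mem_univ _, hi0⟩⟩
      set jm := (Finset.univ.filter (fun i => v i ≠ 0)).max' hAne with hjmdef
      have hjm : v jm ≠ 0 := (Finset.mem_filter.mp (Finset.max'_mem _ hAne)).2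
      have hjmax : ∀ i, v i ≠ 0 → i ≤ jm := fun i hi =>
        Finset.le_max' _ i (Finset.mem_filter.mpr ⟨Finset.mem_univ _, hi⟩)
      obtain ⟨c1, c2, c3⟩ := hVC jm (Nat.pos_of_ne_zero hjm)
      obtain ⟨k0, hk01, hk02⟩ := c3
      have hKne : (Finset.univ.filter (fun k => jm ≤ k ∧ m k ≠ 0)).Nonempty :=
        ⟨k0, Finset.mem_filter.mpr ⟨Finset.mem_univ _, hk01, hk02⟩⟩
      set j := (Finset.univ.filter (fun k => jm ≤ k ∧ m k ≠ 0)).min' hKne with hjdef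
      have hj : jm ≤ j ∧ m j ≠ 0 := (Finset.mem_filter.mp (Finset.min'_mem _ hKne)).2
      have hjmin : ∀ s, jm ≤ s → m s ≠ 0 → j ≤ s := fun s h1 h2 =>
        Finset.min'_le _ s (Finset.mem_filter.mpr ⟨Finset.mem_univ _, h1, h2⟩)
      apply hsink j
      refine ⟨?_, ?_, hlt⟩
      · rw [maxVarOne_le_succ_iff]
        intro i hi
        exact le_trans (hjmax i hi) hj.1
      · rw [le_maxVar_trunc_iff]
        refine ⟨j, le_rfl, (psi_ne_zero_iff w hpos m j).mpr hj.2, ?_⟩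
        have hgap : psumLt (psi w m) j = psumLt (psi w m) jm := by
          apply psumLt_congr_zero _ hj.1
          intro i h1 h2
          have hmi : m i = 0 := by
            by_contra hc
            exact absurd (hjmin i h1 hc) (not_le_of_gt h2)
          simp [psi, hmi]
        have h2 : psumLt (psi w v) jm ≤ degW w v := psumLt_le_degW _ _ _
        omega
  · intro hge j hedge
    exact absurd hedge.2.2 (not_lt_of_ge hge)

end Aux4
/-- The minimal monomial generators of the principal `w`-stable ideal
`\overline{m} = ψ⁻¹(Borel(ψ(m)))` are exactly the sinks (vertices without outgoing
edges) of the finite tree `T_w(m)`. -/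
theorem stmt13 {n : ℕ} (w : Fin n → ℕ) (hpos : ∀ i, 0 < w i) (hmono : Antitone w) (m : Mon n) :
    minGens (psi w ⁻¹' borelCl {psi w m})
      = {v | TreeVertex w m v ∧ ∀ j : Fin n, ¬ treeEdge w m v j} := by
  have hJ : ∀ a : Mon n, (a ∈ psi w ⁻¹' borelCl {psi w m}) ↔
      ∀ t, psum (psi w m) t ≤ psum (psi w a) t := by
    intro a
    rw [Set.mem_preimage, borelCl_singleton]
    exact Iff.rfl
  ext v
  simp only [Set.mem_setOf_eq, minGens]
  constructor
  · rintro ⟨hv, hmin⟩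
    have hvJ := (hJ v).mp hv
    -- removing one variable leaves the ideal
    have hrem : ∀ j : Fin n, 0 < v j →
        ∃ t, j ≤ t ∧ psum (psi w v) t < psum (psi w m) t + w j := by
      intro j hj
      by_contra hc
      push_neg at hc
      set b := v - Pi.single j 1 with hbdef
      have hbapp : ∀ k, b k = v k - (if k = j then 1 else 0) := fun k => by
        rw [hbdef, Pi.sub_apply, Pi.single_apply]
      have hbv : v = b + Pi.single j 1 := by
        funext k
        rw [Pi.add_apply, hbapp k, Pi.single_apply]
        by_cases hk : k = j
        · subst hk; simp; omega
        · simp [hk]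
      have hps : ∀ t, psum (psi w v) t = psum (psi w b) t + (if j ≤ t then w j else 0) :=
        fun t => by conv_lhs => rw [hbv]; rw [psi_add_single, psum_add, psum_single]
      have hbJ : b ∈ psi w ⁻¹' borelCl {psi w m} := by
        rw [hJ]
        intro t
        have h1 := hps t
        by_cases ht : j ≤ t
        · have h2 := hc t ht
          rw [if_pos ht] at h1
          omega
        · have h2 := hvJ t
          rw [if_neg ht] at h1
          omega
      have hble : b ≤ v := by
        rw [Pi.le_def]
        intro k
        rw [hbapp k]
        omega
      have := hmin b hbJ hble
      have h3 := hbapp j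
      rw [this] at h3
      simp at h3
      omega
    have hVCv : VC w m v := by
      intro j hj
      have c1 : psumLt (psi w m) j ≤ psumLt (psi w v) j := psumLt_le_of_psum_le hvJ j
      obtain ⟨t, ht1, ht2⟩ := hrem j hj
      refine ⟨c1, ?_, ?_⟩
      · have h1 : psum (psi w v) j ≤ psum (psi w v) t := psum_mono _ ht1
        have h2 : psum (psi w m) t ≤ degW w m := psum_le_degW _ _ _
        omega
      · by_contra hcon
        push_neg at hcon
        have hgap : psum (psi w m) t = psumLt (psi w m) j := by
          apply psum_eq_psumLt_of_zero _ ht1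
          intro k hk
          have : m k = 0 := hcon k hk
          simp [psi, this]
        have h2 : psum (psi w v) j = psumLt (psi w v) j + w j * v j := by
          rw [psum_eq_psumLt_add]; rfl
        have h3 : psum (psi w v) j ≤ psum (psi w v) t := psum_mono _ ht1
        have h4 : w j ≤ w j * v j := Nat.le_mul_of_pos_right _ hj
        omega
    have hge : degW w m ≤ degW w v := by
      rcases Nat.eq_zero_or_pos n with hn | hn
      · subst hn
        simp [degW]
      · have h1 := hvJ ⟨n - 1, by omega⟩
        rw [psum_last _ hn, psum_last _ hn] at h1
        rw [degW_eq_sum, degW_eq_sum]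
        exact h1
    exact ⟨(treeVertex_iff_VC hpos).mpr hVCv, (sink_iff_of_VC hpos hVCv).mpr hge⟩
  · rintro ⟨htv, hsink⟩
    have hVCv : VC w m v := (treeVertex_iff_VC hpos).mp htv
    have hge : degW w m ≤ degW w v := (sink_iff_of_VC hpos hVCv).mp hsink
    have hvJ : ∀ t, psum (psi w m) t ≤ psum (psi w v) t := by
      intro t
      by_cases hA : (Finset.univ.filter (fun k => t < k ∧ v k ≠ 0)).Nonempty
      · set j := (Finset.univ.filter (fun k => t < k ∧ v k ≠ 0)).min' hA with hjdef
        have hjprop : t < j ∧ v j ≠ 0 := (Finset.mem_filter.mp (Finset.min'_mem _ hA)).2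
        have hjmin : ∀ s, t < s → v s ≠ 0 → j ≤ s := fun s h1 h2 =>
          Finset.min'_le _ s (Finset.mem_filter.mpr ⟨Finset.mem_univ _, h1, h2⟩)
        have hgap : psumLt (psi w v) j = psum (psi w v) t := by
          apply psumLt_eq_psum_of_zero _ hjprop.1
          intro k h1 h2
          have : v k = 0 := by
            by_contra hc
            exact absurd (hjmin k h1 hc) (not_le_of_gt h2)
          simp [psi, this]
        have c1 := (hVCv j (Nat.pos_of_ne_zero hjprop.2)).1
        have h1 : psum (psi w m) t ≤ psumLt (psi w m) j := psum_le_psumLt _ hjprop.1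
        omega
      · rw [Finset.not_nonempty_iff_eq_empty] at hA
        have hz : ∀ k, t < k → v k = 0 := by
          intro k hk
          by_contra hc
          have : k ∈ Finset.univ.filter (fun k => t < k ∧ v k ≠ 0) :=
            Finset.mem_filter.mpr ⟨Finset.mem_univ _, hk, hc⟩
          rw [hA] at this
          exact absurd this (Finset.notMem_empty k)
        have h1 : degW w v = psum (psi w v) t := degW_eq_psum w v t hz
        have h2 : psum (psi w m) t ≤ degW w m := psum_le_degW _ _ _
        omega
    refine ⟨(hJ v).mpr hvJ, ?_⟩
    intro b hb hble
    by_contra hne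
    have hex : ∃ j, b j < v j := by
      by_contra hc
      push_neg at hc
      exact hne (funext fun i => le_antisymm (hble i) (hc i))
    obtain ⟨j, hj⟩ := hex
    have hn : 0 < n := Fin.pos j
    have hbJ := (hJ b).mp hb ⟨n - 1, by omega⟩
    rw [psum_last _ hn, psum_last _ hn] at hbJ
    rw [← degW_eq_sum, ← degW_eq_sum] at hbJ
    -- degW b + w j ≤ degW v
    have hb1 : degW w b + w j ≤ degW w v := by
      rw [← degW_add_single]
      apply degW_mono
      rw [Pi.le_def]
      intro k
      rw [Pi.add_apply, Pi.single_apply]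
      by_cases hk : k = j
      · subst hk
        rw [if_pos rfl]
        omega
      · rw [if_neg hk, add_zero]; exact hble k
    -- degW v < degW m + w j
    have hAne : (Finset.univ.filter (fun i => v i ≠ 0)).Nonempty :=
      ⟨j, Finset.mem_filter.mpr ⟨Finset.mem_univ _, by omega⟩⟩
    set jm := (Finset.univ.filter (fun i => v i ≠ 0)).max' hAne with hjmdef
    have hjm : v jm ≠ 0 := (Finset.mem_filter.mp (Finset.max'_mem _ hAne)).2
    have hjmax : ∀ i, v i ≠ 0 → i ≤ jm := fun i hi =>
      Finset.le_max' _ i (Finset.mem_filter.mpr ⟨Finset.mem_univ _, hi⟩)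
    have c2 := (hVCv jm (Nat.pos_of_ne_zero hjm)).2.1
    have hdv : degW w v = psum (psi w v) jm := by
      apply degW_eq_psum
      intro i hi
      by_contra hc
      exact absurd (hjmax i hc) (not_le_of_gt hi)
    have hwle : w jm ≤ w j := hmono (hjmax j (by omega))
    omega
end
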